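/- arXiv:1511.05631 — 2 statements merged into one kernel-verified Lean document; each statement's English description precedes it below -/
import Mathlib

section
/- Weak law of large numbers: Let E be a sublinear expectation on the space X of bounded measurable real-valued functions on (Ω, F), with upper capacity C(A) := E(1_A). Let {ξ_n}_{n≥1} ⊂ X be pairwise uncorrelated with respect to E and suppose sup_{n≥1} ( E((ξ_n − E(ξ_n))²) + (E(ξ_n) + E(−ξ_n))² ) < ∞. Then there exist constants {λ_i}_{i≥1} with λ_i ∈ [−E(−ξ_i), E(ξ_i)] such that for every ε > 0, C( { ω : |(1/n) Σ_{i=1}^{n} (ξ_i(ω) − λ_i)| > ε } ) → 0 as n → ∞. -/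
open MeasureTheory Set Filter Topology Classical

/-- The space of bounded measurable real-valued functions on `Ω`, as a submodule of `Ω → ℝ`. -/
def BM (Ω : Type*) [MeasurableSpace Ω] : Submodule ℝ (Ω → ℝ) where
  carrier := {f | Measurable f ∧ ∃ M : ℝ, ∀ ω, |f ω| ≤ M}
  zero_mem' := ⟨measurable_const, 0, by simp⟩
  add_mem' := by
    rintro f g ⟨hf, Mf, hMf⟩ ⟨hg, Mg, hMg⟩
    exact ⟨hf.add hg, Mf + Mg, fun ω => (abs_add_le _ _).trans (add_le_add (hMf ω) (hMg ω))⟩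
  smul_mem' := by
    rintro c f ⟨hf, Mf, hMf⟩
    refine ⟨hf.const_smul c, |c| * Mf, fun ω => ?_⟩
    simp only [Pi.smul_apply, smul_eq_mul, abs_mul]
    exact mul_le_mul_of_nonneg_left (hMf ω) (abs_nonneg c)

variable {Ω : Type*} [MeasurableSpace Ω]

lemma mem_BM {f : Ω → ℝ} (hf : Measurable f) (M : ℝ) (hM : ∀ ω, |f ω| ≤ M) : f ∈ BM Ω :=
  ⟨hf, M, hM⟩

lemma BM.measurable (ξ : BM Ω) : Measurable (ξ : Ω → ℝ) := ξ.2.1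

lemma BM.bounded (ξ : BM Ω) : ∃ M : ℝ, ∀ ω, |(ξ : Ω → ℝ) ω| ≤ M := ξ.2.2

/-- A sublinear expectation on the space of bounded measurable functions. -/
structure SLE (Ω : Type*) [MeasurableSpace Ω] where
  E : BM Ω → ℝ
  mono : ∀ ξ η : BM Ω, (∀ ω, (η : Ω → ℝ) ω ≤ (ξ : Ω → ℝ) ω) → E η ≤ E ξ
  const_preserve : ∀ (c : ℝ) (h : (fun _ : Ω => c) ∈ BM Ω), E ⟨fun _ => c, h⟩ = c
  subadd : ∀ ξ η : BM Ω, E (ξ + η) ≤ E ξ + E η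
  pos_homog : ∀ (c : ℝ), 0 ≤ c → ∀ ξ : BM Ω, E (c • ξ) = c * E ξ

/-- The constant function as an element of `BM Ω`. -/
def constBM (Ω : Type*) [MeasurableSpace Ω] (c : ℝ) : BM Ω :=
  ⟨fun _ => c, mem_BM measurable_const |c| fun _ => le_refl _⟩

/-- The indicator function of a measurable set as an element of `BM Ω`. -/
noncomputable def indBM {Ω : Type*} [MeasurableSpace Ω] (A : Set Ω) (hA : MeasurableSet A) : BM Ω :=
  ⟨A.indicator fun _ => 1,
    mem_BM (measurable_const.indicator hA) 1 fun ω => by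
      by_cases h : ω ∈ A <;> simp [Set.indicator_apply, h]⟩

/-- The product of two bounded measurable functions. -/
noncomputable def mulBM (ξ η : BM Ω) : BM Ω := by
  refine ⟨fun ω => (ξ : Ω → ℝ) ω * (η : Ω → ℝ) ω, ?_⟩
  obtain ⟨Mf, hMf⟩ := BM.bounded ξ
  obtain ⟨Mg, hMg⟩ := BM.bounded η
  refine mem_BM ((BM.measurable ξ).mul (BM.measurable η)) (max Mf 0 * max Mg 0) fun ω => ?_
  rw [abs_mul]
  exact mul_le_mul ((hMf ω).trans (le_max_left _ _)) ((hMg ω).trans (le_max_left _ _))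
    (abs_nonneg _) (le_max_right _ _)

/-- The upper capacity associated to a sublinear expectation: `C(A) = E(1_A)` for measurable `A`
(junk value `0` on non-measurable sets). -/
noncomputable def SLE.cap (𝔼 : SLE Ω) (A : Set Ω) : ℝ :=
  if h : MeasurableSet A then 𝔼.E (indBM A h) else 0

/-- The lower capacity associated to a sublinear expectation: `c(A) = -E(-1_A)` for measurable `A`
(junk value `0` on non-measurable sets). -/
noncomputable def SLE.lcap (𝔼 : SLE Ω) (A : Set Ω) : ℝ :=
  if h : MeasurableSet A then -𝔼.E (-(indBM A h)) else 0

/-- A linear expectation dominated by the sublinear expectation `𝔼`. -/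
def Dominated (𝔼 : SLE Ω) (L : BM Ω →ₗ[ℝ] ℝ) : Prop := ∀ ξ : BM Ω, L ξ ≤ 𝔼.E ξ

/-- `ξ` and `η` are uncorrelated with respect to `𝔼` if `L(ξη) = L(ξ)L(η)` for every
linear expectation `L` dominated by `𝔼`. -/
def Uncorrelated (𝔼 : SLE Ω) (ξ η : BM Ω) : Prop :=
  ∀ L : BM Ω →ₗ[ℝ] ℝ, Dominated 𝔼 L → L (mulBM ξ η) = L ξ * L η

/-- `𝔼` is regular: if `ξ n ↓ 0` pointwise then `𝔼.E (ξ n) ↓ 0`. -/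
def SLE.Regular (𝔼 : SLE Ω) : Prop :=
  ∀ ξ : ℕ → BM Ω, (∀ ω, Antitone fun n => (ξ n : Ω → ℝ) ω) →
    (∀ ω, Tendsto (fun n => (ξ n : Ω → ℝ) ω) atTop (𝓝 0)) →
    Tendsto (fun n => 𝔼.E (ξ n)) atTop (𝓝 0)

/-- The σ-field generated by `ξ a, …, ξ b`. -/
def sigmaGen (ξ : ℕ → BM Ω) (a b : ℕ) : MeasurableSpace Ω :=
  ⨆ i ∈ Set.Icc a b, MeasurableSpace.comap (fun ω => (ξ i : Ω → ℝ) ω) inferInstance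

/-- `{ξ_n}_{n ≥ 1}` is an independent sequence under `𝔼`: pairwise uncorrelated, and
`C(A ∩ B) ≤ C(A) C(B)` whenever `A ∈ σ(ξ_1, …, ξ_m)` and `B ∈ σ(ξ_{m+1}, …, ξ_n)`, `m < n`. -/
def IndepSeq (𝔼 : SLE Ω) (ξ : ℕ → BM Ω) : Prop :=
  (∀ i j, 1 ≤ i → 1 ≤ j → i ≠ j → Uncorrelated 𝔼 (ξ i) (ξ j)) ∧
  ∀ m n : ℕ, 1 ≤ m → m < n → ∀ A B : Set Ω,
    MeasurableSet[sigmaGen ξ 1 m] A → MeasurableSet[sigmaGen ξ (m + 1) n] B →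
    𝔼.cap (A ∩ B) ≤ 𝔼.cap A * 𝔼.cap B

/-- Assumption (H₀): for every disjoint measurable cover `{A_n}` of `Ω`,
the series `Σ C(A_n)` has bounded partial sums. -/
def H0 (𝔼 : SLE Ω) : Prop :=
  ∀ A : ℕ → Set Ω, (∀ n, MeasurableSet (A n)) → Pairwise (Function.onFun Disjoint A) →
    (⋃ n, A n) = Set.univ → ∃ M : ℝ, ∀ N : ℕ, ∑ n ∈ Finset.range N, 𝔼.cap (A n) < M

/-!
Fix one linear expectation `L₀` dominated by `E` (Hahn–Banach) and centre `ξ_i` at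
`λ_i := L₀(ξ_i) ∈ [-E(-ξ_i), E(ξ_i)]`. If `ξ_i, ξ_j` are uncorrelated, then for every dominated `L`
the product `(L ξ_i - L₀ ξ_i)(L ξ_j - L₀ ξ_j)` vanishes: otherwise the midpoint `(L + L₀)/2`,
again dominated, would violate `L(ξ_i ξ_j) = L(ξ_i) L(ξ_j)`. Hence every dominated `L` kills the
cross terms of `S_n² = (Σ (ξ_i - λ_i))²`, and since `E` is the supremum of the dominated `L`, we get
`E(S_n²) ≤ Σ E((ξ_i - λ_i)²) = O(n)`. Chebyshev's inequality for `C` finishes the proof.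
-/

@[simp]
lemma constBM_apply (c : ℝ) (ω : Ω) : (constBM Ω c : Ω → ℝ) ω = c := rfl

@[simp]
lemma mulBM_apply (ξ η : BM Ω) (ω : Ω) :
    (mulBM ξ η : Ω → ℝ) ω = (ξ : Ω → ℝ) ω * (η : Ω → ℝ) ω := rfl

lemma BM.sum_apply {ι : Type*} (s : Finset ι) (f : ι → BM Ω) (ω : Ω) :
    ((∑ i ∈ s, f i : BM Ω) : Ω → ℝ) ω = ∑ i ∈ s, (f i : Ω → ℝ) ω := by
  rw [Submodule.coe_sum, Finset.sum_apply]

lemma mulBM_smul_smul (c : ℝ) (ξ : BM Ω) : mulBM (c • ξ) (c • ξ) = c ^ 2 • mulBM ξ ξ := by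
  ext ω
  simp only [mulBM_apply, Submodule.coe_smul, Pi.smul_apply, smul_eq_mul]
  ring

lemma mulBM_sum_sum {ι : Type*} (s : Finset ι) (f : ι → BM Ω) :
    mulBM (∑ i ∈ s, f i) (∑ i ∈ s, f i) = ∑ i ∈ s, ∑ j ∈ s, mulBM (f i) (f j) := by
  ext ω
  simp only [mulBM_apply, BM.sum_apply, Finset.sum_mul_sum]

namespace SLE

variable (𝔼 : SLE Ω)

lemma E_const (c : ℝ) : 𝔼.E (constBM Ω c) = c :=
  𝔼.const_preserve c _

lemma E_zero : 𝔼.E 0 = 0 := by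
  simpa using 𝔼.pos_homog 0 le_rfl 0

lemma E_nonneg {η : BM Ω} (h : ∀ ω, 0 ≤ (η : Ω → ℝ) ω) : 0 ≤ 𝔼.E η :=
  𝔼.E_zero ▸ 𝔼.mono η 0 h

lemma E_add_E_neg_nonneg (η : BM Ω) : 0 ≤ 𝔼.E η + 𝔼.E (-η) := by
  simpa [𝔼.E_zero] using 𝔼.subadd η (-η)

lemma cap_eq {A : Set Ω} (hA : MeasurableSet A) : 𝔼.cap A = 𝔼.E (indBM A hA) :=
  dif_pos hA

lemma cap_nonneg (A : Set Ω) : 0 ≤ 𝔼.cap A := by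
  by_cases hA : MeasurableSet A
  · rw [𝔼.cap_eq hA]
    exact 𝔼.E_nonneg (Set.indicator_nonneg fun _ _ => zero_le_one)
  · rw [cap, dif_neg hA]

lemma cap_lt_abs_le (ζ : BM Ω) {ε : ℝ} (hε : 0 < ε) :
    𝔼.cap {ω | ε < |(ζ : Ω → ℝ) ω|} ≤ 𝔼.E (mulBM ζ ζ) / ε ^ 2 := by
  have hA : MeasurableSet {ω | ε < |(ζ : Ω → ℝ) ω|} :=
    measurableSet_lt measurable_const (BM.measurable ζ).abs
  have hpt : ∀ ω, (indBM _ hA : Ω → ℝ) ω ≤ (((ε ^ 2)⁻¹ • mulBM ζ ζ : BM Ω) : Ω → ℝ) ω := by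
    intro ω
    change Set.indicator {ω | ε < |(ζ : Ω → ℝ) ω|} (fun _ => (1 : ℝ)) ω ≤ (ε ^ 2)⁻¹ * ((ζ : Ω → ℝ) ω * (ζ : Ω → ℝ) ω)
    rw [← div_eq_inv_mul, le_div_iff₀ (by positivity)]
    by_cases hω : ε < |(ζ : Ω → ℝ) ω|
    · rw [Set.indicator_of_mem (show ω ∈ {ω | ε < |(ζ : Ω → ℝ) ω|} from hω), one_mul,
        ← abs_mul_abs_self]
      nlinarith
    · rw [Set.indicator_of_notMem (show ω ∉ {ω | ε < |(ζ : Ω → ℝ) ω|} from hω), zero_mul]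
      exact mul_self_nonneg _
  rw [𝔼.cap_eq hA, div_eq_inv_mul, ← 𝔼.pos_homog _ (by positivity)]
  exact 𝔼.mono _ _ hpt

lemma cap_lt_abs_average_le (S : BM Ω) {ε : ℝ} (hε : 0 < ε) (n : ℕ) {C : ℝ}
    (hS : 𝔼.E (mulBM S S) ≤ C * n) :
    𝔼.cap {ω | ε < |(1 / (n : ℝ)) * (S : Ω → ℝ) ω|} ≤ C / ε ^ 2 * (1 / n) := by
  refine (𝔼.cap_lt_abs_le ((1 / (n : ℝ)) • S) hε).trans ?_
  rw [mulBM_smul_smul, 𝔼.pos_homog _ (sq_nonneg _)]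
  rcases n.eq_zero_or_pos with rfl | hn
  · simp
  · calc (1 / (n : ℝ)) ^ 2 * 𝔼.E (mulBM S S) / ε ^ 2
        ≤ (1 / (n : ℝ)) ^ 2 * (C * n) / ε ^ 2 := by gcongr
      _ = C / ε ^ 2 * (1 / n) := by field_simp

-- Hahn–Banach, extending `c • η ↦ c • E(η)` from the span of `η`.
lemma exists_dominated_eq (η : BM Ω) : ∃ L : BM Ω →ₗ[ℝ] ℝ, Dominated 𝔼 L ∧ L η = 𝔼.E η := by
  have hzero : ∀ c : ℝ, c • η = 0 → c • 𝔼.E η = 0 := by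
    intro c hc
    rcases smul_eq_zero.mp hc with rfl | rfl
    · exact zero_smul ℝ _
    · rw [𝔼.E_zero, smul_zero]
  let f : BM Ω →ₗ.[ℝ] ℝ := LinearPMap.mkSpanSingleton' η (𝔼.E η) hzero
  have hf : ∀ x : f.domain, f x ≤ 𝔼.E x := by
    rintro ⟨x, hx⟩
    obtain ⟨c, rfl⟩ := Submodule.mem_span_singleton.mp hx
    rw [LinearPMap.mkSpanSingleton'_apply]
    change c * 𝔼.E η ≤ 𝔼.E (c • η)
    rcases le_or_gt 0 c with hc | hc
    · exact (𝔼.pos_homog c hc η).ge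
    · rw [show c • η = (-c) • -η by rw [neg_smul_neg], 𝔼.pos_homog (-c) (by linarith)]
      nlinarith [𝔼.E_add_E_neg_nonneg η]
  obtain ⟨g, hgf, hg⟩ := exists_extension_of_le_sublinear f 𝔼.E
    (fun c hc => 𝔼.pos_homog c hc.le) 𝔼.subadd hf
  exact ⟨g, hg, (hgf ⟨η, Submodule.mem_span_singleton_self η⟩).trans
    (LinearPMap.mkSpanSingleton'_apply_self _ _ _ _)⟩

lemma E_le_of_forall_dominated {η : BM Ω} {B : ℝ}
    (h : ∀ L : BM Ω →ₗ[ℝ] ℝ, Dominated 𝔼 L → L η ≤ B) : 𝔼.E η ≤ B := by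
  obtain ⟨L, hL, hLη⟩ := 𝔼.exists_dominated_eq η
  exact hLη ▸ h L hL

lemma E_mulBM_sub_const_le (η : BM Ω) {a : ℝ} (ha : a ∈ Set.Icc (-𝔼.E (-η)) (𝔼.E η)) :
    𝔼.E (mulBM (η - constBM Ω a) (η - constBM Ω a)) ≤
      2 * (𝔼.E (mulBM (η - constBM Ω (𝔼.E η)) (η - constBM Ω (𝔼.E η))) +
        (𝔼.E η + 𝔼.E (-η)) ^ 2) := by
  set m := 𝔼.E η
  have hpt : ∀ ω, (mulBM (η - constBM Ω a) (η - constBM Ω a) : Ω → ℝ) ω ≤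
      (((2 : ℝ) • mulBM (η - constBM Ω m) (η - constBM Ω m) + constBM Ω (2 * (m - a) ^ 2) :
        BM Ω) : Ω → ℝ) ω := by
    intro ω
    change ((η : Ω → ℝ) ω - a) * ((η : Ω → ℝ) ω - a) ≤
      2 * (((η : Ω → ℝ) ω - m) * ((η : Ω → ℝ) ω - m)) + 2 * (m - a) ^ 2
    nlinarith [sq_nonneg ((η : Ω → ℝ) ω - m - (m - a))]
  have hsum := 𝔼.subadd ((2 : ℝ) • mulBM (η - constBM Ω m) (η - constBM Ω m))
    (constBM Ω (2 * (m - a) ^ 2))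
  rw [𝔼.pos_homog 2 zero_le_two, 𝔼.E_const] at hsum
  have hma : (m - a) ^ 2 ≤ (m + 𝔼.E (-η)) ^ 2 := by
    apply pow_le_pow_left₀ <;> linarith [ha.1, ha.2]
  linarith [𝔼.mono _ _ hpt]

end SLE

namespace Dominated

variable {𝔼 : SLE Ω} {L L₀ : BM Ω →ₗ[ℝ] ℝ}

lemma map_constBM (hL : Dominated 𝔼 L) (c : ℝ) : L (constBM Ω c) = c := by
  have hneg : -constBM Ω c = constBM Ω (-c) := rfl
  have hup := hL (constBM Ω c)
  have hlow := hL (-constBM Ω c)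
  rw [hneg, 𝔼.E_const] at hlow
  rw [𝔼.E_const] at hup
  rw [← hneg, map_neg] at hlow
  linarith

lemma map_mem_Icc (hL : Dominated 𝔼 L) (η : BM Ω) : L η ∈ Set.Icc (-𝔼.E (-η)) (𝔼.E η) :=
  ⟨by linarith [hL (-η), map_neg L η], hL η⟩

lemma midpoint (hL : Dominated 𝔼 L) (hL₀ : Dominated 𝔼 L₀) :
    Dominated 𝔼 ((1 / 2 : ℝ) • L + (1 / 2 : ℝ) • L₀) := fun ζ => by
  simp only [LinearMap.add_apply, LinearMap.smul_apply, smul_eq_mul]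
  linarith [hL ζ, hL₀ ζ]

lemma map_mulBM_sub_const (hL : Dominated 𝔼 L) {ξ η : BM Ω} (hu : Uncorrelated 𝔼 ξ η)
    (a b : ℝ) : L (mulBM (ξ - constBM Ω a) (η - constBM Ω b)) = (L ξ - a) * (L η - b) := by
  have hexp : mulBM (ξ - constBM Ω a) (η - constBM Ω b) =
      mulBM ξ η - a • η - b • ξ + constBM Ω (a * b) := by
    ext ω
    simp only [mulBM_apply, Submodule.coe_add, Submodule.coe_sub, Submodule.coe_smul,
      Pi.add_apply, Pi.sub_apply, Pi.smul_apply, smul_eq_mul, constBM_apply]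
    ring
  rw [hexp, map_add, map_sub, map_sub, map_smul, map_smul, hL.map_constBM, hu L hL,
    smul_eq_mul, smul_eq_mul]
  ring

lemma sub_mul_sub_eq_zero (hL : Dominated 𝔼 L) (hL₀ : Dominated 𝔼 L₀) {ξ η : BM Ω}
    (hu : Uncorrelated 𝔼 ξ η) : (L ξ - L₀ ξ) * (L η - L₀ η) = 0 := by
  have hmid := hu _ (hL.midpoint hL₀)
  simp only [LinearMap.add_apply, LinearMap.smul_apply, smul_eq_mul] at hmid
  nlinarith [hu L hL, hu L₀ hL₀]

lemma map_mulBM_sum_centered (hL : Dominated 𝔼 L) (hL₀ : Dominated 𝔼 L₀) {ι : Type*}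
    {s : Finset ι} {ξ : ι → BM Ω}
    (hunc : ∀ i ∈ s, ∀ j ∈ s, i ≠ j → Uncorrelated 𝔼 (ξ i) (ξ j)) :
    L (mulBM (∑ i ∈ s, (ξ i - constBM Ω (L₀ (ξ i)))) (∑ i ∈ s, (ξ i - constBM Ω (L₀ (ξ i))))) =
      ∑ i ∈ s, L (mulBM (ξ i - constBM Ω (L₀ (ξ i))) (ξ i - constBM Ω (L₀ (ξ i)))) := by
  rw [mulBM_sum_sum, map_sum]
  refine Finset.sum_congr rfl fun i hi => ?_
  rw [map_sum, Finset.sum_eq_single_of_mem i hi]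
  intro j hj hji
  rw [hL.map_mulBM_sub_const (hunc i hi j hj hji.symm)]
  exact hL.sub_mul_sub_eq_zero hL₀ (hunc i hi j hj hji.symm)

end Dominated

lemma SLE.E_mulBM_sum_centered_le (𝔼 : SLE Ω) {L₀ : BM Ω →ₗ[ℝ] ℝ} (hL₀ : Dominated 𝔼 L₀)
    {ι : Type*} {s : Finset ι} {ξ : ι → BM Ω}
    (hunc : ∀ i ∈ s, ∀ j ∈ s, i ≠ j → Uncorrelated 𝔼 (ξ i) (ξ j)) :
    𝔼.E (mulBM (∑ i ∈ s, (ξ i - constBM Ω (L₀ (ξ i))))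
        (∑ i ∈ s, (ξ i - constBM Ω (L₀ (ξ i))))) ≤
      ∑ i ∈ s, 𝔼.E (mulBM (ξ i - constBM Ω (L₀ (ξ i))) (ξ i - constBM Ω (L₀ (ξ i)))) :=
  𝔼.E_le_of_forall_dominated fun L hL => by
    rw [hL.map_mulBM_sum_centered hL₀ hunc]
    exact Finset.sum_le_sum fun i _ => hL _

/-- The weak law of large numbers for sublinear expectations. -/
theorem weak_LLN (𝔼 : SLE Ω) (ξ : ℕ → BM Ω)
    (hunc : ∀ i j, 1 ≤ i → 1 ≤ j → i ≠ j → Uncorrelated 𝔼 (ξ i) (ξ j))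
    (hbdd : ∃ K : ℝ, ∀ n, 1 ≤ n →
      𝔼.E (mulBM (ξ n - constBM Ω (𝔼.E (ξ n))) (ξ n - constBM Ω (𝔼.E (ξ n)))) +
        (𝔼.E (ξ n) + 𝔼.E (-ξ n)) ^ 2 ≤ K) :
    ∃ lam : ℕ → ℝ, (∀ i, 1 ≤ i → lam i ∈ Set.Icc (-𝔼.E (-ξ i)) (𝔼.E (ξ i))) ∧
      ∀ ε > 0, Tendsto (fun n : ℕ =>
          𝔼.cap {ω | ε < |(1 / (n : ℝ)) * ∑ i ∈ Finset.Icc 1 n, ((ξ i : Ω → ℝ) ω - lam i)|})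
        atTop (𝓝 0) := by
  obtain ⟨K, hK⟩ := hbdd
  obtain ⟨L₀, hL₀, -⟩ := 𝔼.exists_dominated_eq 0
  refine ⟨fun i => L₀ (ξ i), fun i _ => hL₀.map_mem_Icc (ξ i), fun ε hε => ?_⟩
  let S (n : ℕ) : BM Ω := ∑ i ∈ Finset.Icc 1 n, (ξ i - constBM Ω (L₀ (ξ i)))
  have hS : ∀ n : ℕ, 𝔼.E (mulBM (S n) (S n)) ≤ 2 * K * n := fun n => calc
    _ ≤ ∑ i ∈ Finset.Icc 1 n, 2 * K := by
      refine (𝔼.E_mulBM_sum_centered_le hL₀ fun i hi j hj => hunc i j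
        (Finset.mem_Icc.mp hi).1 (Finset.mem_Icc.mp hj).1).trans (Finset.sum_le_sum fun i hi => ?_)
      exact (𝔼.E_mulBM_sub_const_le _ (hL₀.map_mem_Icc (ξ i))).trans
        (by linarith [hK i (Finset.mem_Icc.mp hi).1])
    _ = 2 * K * n := by simp [mul_comm]
  have hcap : ∀ n : ℕ, 𝔼.cap {ω | ε < |(1 / (n : ℝ)) *
      ∑ i ∈ Finset.Icc 1 n, ((ξ i : Ω → ℝ) ω - L₀ (ξ i))|} ≤ 2 * K / ε ^ 2 * (1 / n) := fun n => by
    simpa [S] using 𝔼.cap_lt_abs_average_le (S n) hε n (hS n)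
  have hlim : Tendsto (fun n : ℕ => 2 * K / ε ^ 2 * (1 / n)) atTop (𝓝 0) := by
    have := tendsto_one_div_atTop_nhds_zero_nat.const_mul (2 * K / ε ^ 2)
    rwa [mul_zero] at this
  exact tendsto_of_tendsto_of_tendsto_of_le_of_le tendsto_const_nhds hlim
    (fun n => 𝔼.cap_nonneg _) hcap
end

section
/- Let E be a regular sublinear expectation on the space X of bounded measurable real-valued functions on (Ω, F), with upper capacity C(A) := E(1_A). If {ξ_n}_{n≥1} ⊂ X is a Cauchy sequence in capacity (i.e. for all ε, δ > 0 there exists N such that C({|ξ_n − ξ_m| > ε}) < δ for all m, n ≥ N), then there exists a subsequence {ξ_{n_k}}_{k≥1} and a random variable ξ such that ξ_{n_k} → ξ pointwise outside a C-polar set. -/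
/-!
Pass to a subsequence along which `C(|ξ_{φ(k+1)} - ξ_{φ k}| > 2⁻ᵏ) < 2⁻ᵏ`. Regularity of `E`
makes `C` continuous from above at `∅`, hence countably subadditive, so the Borel–Cantelli
argument goes through: the set of `ω` lying in infinitely many of these events is `C`-polar.
Off that set the increments of `ξ_{φ k}(ω)` are eventually bounded by `2⁻ᵏ`, so the subsequence
converges there.
-/

open MeasureTheory Set Filter Topology Classical

variable {Ω : Type*} [MeasurableSpace Ω]

lemma indBM_le_of_subset {A B : Set Ω} (hA : MeasurableSet A) (hB : MeasurableSet B)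
    (hAB : A ⊆ B) (ω : Ω) : (indBM A hA : Ω → ℝ) ω ≤ (indBM B hB : Ω → ℝ) ω :=
  indicator_le_indicator_of_subset hAB (fun _ => zero_le_one) ω

namespace SLE

variable (𝔼 : SLE Ω)

variable {𝔼}

lemma cap_mono {A B : Set Ω} (hA : MeasurableSet A) (hB : MeasurableSet B) (hAB : A ⊆ B) :
    𝔼.cap A ≤ 𝔼.cap B := by
  rw [𝔼.cap_eq hA, 𝔼.cap_eq hB]
  exact 𝔼.mono _ _ (indBM_le_of_subset hA hB hAB)

lemma cap_union_le {A B : Set Ω} (hA : MeasurableSet A) (hB : MeasurableSet B) :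
    𝔼.cap (A ∪ B) ≤ 𝔼.cap A + 𝔼.cap B := by
  rw [𝔼.cap_eq hA, 𝔼.cap_eq hB, 𝔼.cap_eq (hA.union hB)]
  refine le_trans (𝔼.mono _ _ fun ω => ?_) (𝔼.subadd _ _)
  show (A ∪ B).indicator (fun _ => (1 : ℝ)) ω ≤
    A.indicator (fun _ => 1) ω + B.indicator (fun _ => 1) ω
  by_cases hωA : ω ∈ A <;> by_cases hωB : ω ∈ B <;> simp [hωA, hωB]

lemma cap_biUnion_finset_le {ι : Type*} (s : Finset ι) {D : ι → Set Ω}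
    (hD : ∀ i, MeasurableSet (D i)) : 𝔼.cap (⋃ i ∈ s, D i) ≤ ∑ i ∈ s, 𝔼.cap (D i) := by
  induction s using Finset.induction with
  | empty =>
    have hempty : indBM (∅ : Set Ω) .empty = 0 := Subtype.ext (indicator_empty _)
    simp [𝔼.cap_eq .empty, hempty, E_zero]
  | insert i s hi ih =>
    rw [Finset.set_biUnion_insert, Finset.sum_insert hi]
    exact (cap_union_le (hD i) (s.measurableSet_biUnion fun j _ => hD j)).trans (by linarith)

lemma Regular.tendsto_cap_zero {A : ℕ → Set Ω} (hreg : 𝔼.Regular)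
    (hA : ∀ n, MeasurableSet (A n)) (hanti : Antitone A) (hempty : ⋂ n, A n = ∅) :
    Tendsto (fun n => 𝔼.cap (A n)) atTop (𝓝 0) := by
  simp only [𝔼.cap_eq (hA _)]
  refine hreg _ (fun ω m n hmn => indBM_le_of_subset _ _ (hanti hmn) ω) fun ω => ?_
  obtain ⟨n, hn⟩ : ∃ n, ω ∉ A n := by simpa using (Set.ext_iff.1 hempty ω).1
  refine tendsto_atTop_of_eventually_const (i₀ := n) fun m hm => ?_
  exact indicator_of_notMem (fun h => hn (hanti hm h)) (fun _ => (1 : ℝ))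

lemma Regular.cap_iUnion_le_tsum {D : ℕ → Set Ω} (hreg : 𝔼.Regular)
    (hD : ∀ k, MeasurableSet (D k)) (hsum : Summable fun k => 𝔼.cap (D k)) :
    𝔼.cap (⋃ k, D k) ≤ ∑' k, 𝔼.cap (D k) := by
  set U := ⋃ k, D k
  have hU : MeasurableSet U := .iUnion hD
  have hfin : ∀ n, MeasurableSet (⋃ k ∈ Finset.range n, D k) := fun n =>
    (Finset.range n).measurableSet_biUnion fun k _ => hD k
  have htail : Tendsto (fun n => 𝔼.cap (U \ ⋃ k ∈ Finset.range n, D k)) atTop (𝓝 0) := by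
    refine hreg.tendsto_cap_zero (fun n => hU.diff (hfin n)) (fun m n hmn => ?_) ?_
    · exact sdiff_subset_sdiff_right
        (biUnion_subset_biUnion_left (by simpa using Finset.range_subset_range.2 hmn))
    · refine eq_empty_iff_forall_notMem.2 fun ω hω => ?_
      obtain ⟨k, hk⟩ := mem_iUnion.1 (mem_iInter.1 hω 0).1
      exact (mem_iInter.1 hω (k + 1)).2 (mem_biUnion (Finset.self_mem_range_succ k) hk)
  refine ge_of_tendsto' (by simpa only [zero_add] using htail.add_const (∑' k, 𝔼.cap (D k)))
    fun n => ?_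
  calc 𝔼.cap U
      ≤ 𝔼.cap ((U \ ⋃ k ∈ Finset.range n, D k) ∪ ⋃ k ∈ Finset.range n, D k) :=
        cap_mono hU ((hU.diff (hfin n)).union (hfin n)) (subset_sdiff_union _ _)
    _ ≤ 𝔼.cap (U \ ⋃ k ∈ Finset.range n, D k) + ∑ k ∈ Finset.range n, 𝔼.cap (D k) :=
        (cap_union_le (hU.diff (hfin n)) (hfin n)).trans
          (add_le_add le_rfl (cap_biUnion_finset_le _ hD))
    _ ≤ _ := add_le_add le_rfl (hsum.sum_le_tsum _ fun k _ => 𝔼.cap_nonneg _)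

lemma Regular.cap_limsup_eq_zero {D : ℕ → Set Ω} (hreg : 𝔼.Regular)
    (hD : ∀ k, MeasurableSet (D k)) (hsum : Summable fun k => 𝔼.cap (D k)) :
    𝔼.cap (limsup D atTop) = 0 := by
  have hlimsup : MeasurableSet (limsup D atTop) := MeasurableSet.measurableSet_limsup hD
  refine le_antisymm (ge_of_tendsto' (tendsto_sum_nat_add fun k => 𝔼.cap (D k)) fun m => ?_)
    (𝔼.cap_nonneg _)
  calc 𝔼.cap (limsup D atTop) ≤ 𝔼.cap (⋃ k, D (k + m)) := by
        refine cap_mono hlimsup (.iUnion fun k => hD _) ?_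
        rw [limsup_eq_iInf_iSup_of_nat']
        exact iInter_subset (fun n => ⋃ i, D (i + n)) m
    _ ≤ ∑' k, 𝔼.cap (D (k + m)) :=
        hreg.cap_iUnion_le_tsum (fun k => hD _) ((summable_nat_add_iff m).2 hsum)

end SLE

lemma exists_strictMono_cap_abs_sub_lt {𝔼 : SLE Ω} {ξ : ℕ → BM Ω}
    (hcauchy : ∀ ε > 0, ∀ δ > 0, ∃ N : ℕ, ∀ m ≥ N, ∀ n ≥ N,
      𝔼.cap {ω | ε < |(ξ n : Ω → ℝ) ω - (ξ m : Ω → ℝ) ω|} < δ)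
    (ε : ℕ → ℝ) (hε : ∀ k, 0 < ε k) :
    ∃ φ : ℕ → ℕ, StrictMono φ ∧ ∀ k,
      𝔼.cap {ω | ε k < |(ξ (φ (k + 1)) : Ω → ℝ) ω - (ξ (φ k) : Ω → ℝ) ω|} < ε k := by
  have hev : ∀ k, ∀ᶠ n in atTop, ∀ m ≥ n,
      𝔼.cap {ω | ε k < |(ξ m : Ω → ℝ) ω - (ξ n : Ω → ℝ) ω|} < ε k := fun k => by
    obtain ⟨N, hN⟩ := hcauchy (ε k) (hε k) (ε k) (hε k)
    exact eventually_atTop.2 ⟨N, fun n hn m hm => hN n hn m (hn.trans hm)⟩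
  obtain ⟨φ, hφ, hφev⟩ := extraction_forall_of_eventually hev
  exact ⟨φ, hφ, fun k => hφev k _ (hφ k.lt_succ_self).le⟩

lemma Real.exists_tendsto_of_eventually_abs_sub_le {u d : ℕ → ℝ} (hd : Summable d)
    (h : ∀ᶠ k in atTop, |u (k + 1) - u k| ≤ d k) : ∃ l, Tendsto u atTop (𝓝 l) := by
  refine cauchySeq_tendsto_of_complete (cauchySeq_of_summable_dist ?_)
  refine hd.of_norm_bounded_eventually_nat (h.mono fun k hk => ?_)
  rwa [Real.norm_eq_abs, abs_dist, Real.dist_eq, abs_sub_comm]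

/-- If `{ξ_n}` is Cauchy in capacity under a regular sublinear expectation,
then some subsequence converges pointwise outside a `C`-polar set to a random variable. -/
theorem cauchy_in_capacity_has_qs_convergent_subsequence (𝔼 : SLE Ω) (hreg : 𝔼.Regular)
    (ξ : ℕ → BM Ω)
    (hcauchy : ∀ ε > 0, ∀ δ > 0, ∃ N : ℕ, ∀ m ≥ N, ∀ n ≥ N,
      𝔼.cap {ω | ε < |(ξ n : Ω → ℝ) ω - (ξ m : Ω → ℝ) ω|} < δ) :
    ∃ φ : ℕ → ℕ, StrictMono φ ∧ ∃ ξ₀ : Ω → ℝ, Measurable ξ₀ ∧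
      ∃ N : Set Ω, MeasurableSet N ∧ 𝔼.cap N = 0 ∧ ∀ ω ∉ N,
        Tendsto (fun k => (ξ (φ k) : Ω → ℝ) ω) atTop (𝓝 (ξ₀ ω)) := by
  obtain ⟨φ, hφ, hcap⟩ :=
    exists_strictMono_cap_abs_sub_lt hcauchy (fun k => (1 / 2 : ℝ) ^ k) fun k => by positivity
  set D : ℕ → Set Ω :=
    fun k => {ω | (1 / 2 : ℝ) ^ k < |(ξ (φ (k + 1)) : Ω → ℝ) ω - (ξ (φ k) : Ω → ℝ) ω|}
  have hD : ∀ k, MeasurableSet (D k) := fun k =>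
    measurableSet_lt measurable_const ((BM.measurable _).sub (BM.measurable _)).abs
  have hpolar : 𝔼.cap (limsup D atTop) = 0 := hreg.cap_limsup_eq_zero hD
    (summable_geometric_two.of_nonneg_of_le (fun k => 𝔼.cap_nonneg _) fun k => (hcap k).le)
  have hconv : ∀ ω ∉ limsup D atTop,
      ∃ l, Tendsto (fun k => (ξ (φ k) : Ω → ℝ) ω) atTop (𝓝 l) := by
    intro ω hω
    rw [mem_limsup_iff_frequently_mem, not_frequently] at hω
    exact Real.exists_tendsto_of_eventually_abs_sub_le summable_geometric_two
      (hω.mono fun k hk => not_lt.1 hk)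
  refine ⟨φ, hφ, fun ω => limUnder atTop fun k => (ξ (φ k) : Ω → ℝ) ω,
    (StronglyMeasurable.limUnder fun k => (BM.measurable _).stronglyMeasurable).measurable,
    limsup D atTop, .measurableSet_limsup hD, hpolar,
    fun ω hω => tendsto_nhds_limUnder (hconv ω hω)⟩
end
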